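/- There exists a hereditary translation quiver (Γ, τ) such that (Γ^2, τ^2) is not hereditary. For instance, take Γ with vertices u_i and v_i for i ≥ 0, single arrows u_i → v_i and v_i → u_{i+1} for all i ≥ 0, and τ(u_{i+1}) = u_i, τ(v_{i+1}) = v_i (with u_0, v_0 projective): then (Γ, τ) is a hereditary translation quiver, Γ^2 has no arrows at all (no path of length 2 in Γ is sectional), yet Γ^2 has non-projective vertices; hence Γ^2 has a non-projective vertex with no incoming arrow and is not hereditary. -/

import Mathlib

/-- A quiver (given by its arrow types `A x y`) is locally finite if each
vertex has only finitely many arrows between any pair of vertices and only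
finitely many neighbours. -/
def QuiverLocFin {V : Type*} (A : V → V → Type*) : Prop :=
  (∀ x y, Finite (A x y)) ∧ (∀ x, {y | Nonempty (A x y)}.Finite) ∧
    (∀ y, {x | Nonempty (A x y)}.Finite)

/-- The partially defined translation `τ : V → Option V` is injective on its
domain. -/
def TauInjective {V : Type*} (τ : V → Option V) : Prop :=
  ∀ x y z, τ x = some z → τ y = some z → x = y

/-- A translation quiver: a locally finite quiver together with an injective
partially defined translation `τ` such that for every vertex `x` and every
vertex `y` in the domain of `τ`, the number of arrows from `x` to `y` equals
the number of arrows from `τ(y)` to `x`.  The projective vertices are those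
outside the domain of `τ` (i.e. those with `τ y = none`). -/
def IsTranslationQuiver {V : Type*} (A : V → V → Type*) (τ : V → Option V) : Prop :=
  QuiverLocFin A ∧ TauInjective τ ∧
    ∀ x y z, τ y = some z → Nat.card (A x y) = Nat.card (A z x)

/-- The `k`-th iterate of the partially defined map `τ`. -/
def iterTau {V : Type*} (τ : V → Option V) : ℕ → V → Option V
  | 0, x => some x
  | k+1, x => (τ x).bind (iterTau τ k)

/-- The sectional condition on a sequence of vertices `v 0, v 1, …, v m`:
`τ (v (s+1)) ≠ v (s-1)` for all `0 < s < m` for which `τ (v (s+1))` is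
defined. -/
def SectCond {V : Type*} (τ : V → Option V) (m : ℕ) (v : Fin (m+1) → V) : Prop :=
  ∀ (s : ℕ) (_ : 1 ≤ s) (h2 : s + 1 ≤ m),
    τ (v ⟨s+1, by omega⟩) ≠ some (v ⟨s-1, by omega⟩)

/-- `v 0, v 1, …, v m` is (the sequence of vertices of) a sectional path:
there is an arrow `v s → v (s+1)` for each `s`, and the sectional condition
holds. -/
def IsSectionalPath {V : Type*} (A : V → V → Type*) (τ : V → Option V) (m : ℕ)
    (v : Fin (m+1) → V) : Prop :=
  (∀ s : Fin m, Nonempty (A (v s.castSucc) (v s.succ))) ∧ SectCond τ m v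

/-- The type of sectional paths of length `m` from `x` to `y`: a sequence of
vertices `v 0 = x, v 1, …, v m = y` satisfying the sectional condition,
together with a chosen arrow `v s → v (s+1)` for each `s`. -/
def SectPath {V : Type*} (A : V → V → Type*) (τ : V → Option V) (m : ℕ)
    (x y : V) : Type _ :=
  Σ v : {v : Fin (m+1) → V // v 0 = x ∧ v (Fin.last m) = y ∧ SectCond τ m v},
    ∀ s : Fin m, A (v.1 s.castSucc) (v.1 s.succ)

/-- A translation quiver is hereditary if (i) every non-projective vertex has
an incoming arrow, (ii) there is no oriented cyclic path of length at least
one containing a projective vertex, and (iii) whenever there is an arrow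
`x → y` with `y` projective, `x` is projective. -/
def IsHereditary {V : Type*} (A : V → V → Type*) (τ : V → Option V) : Prop :=
  (∀ z, τ z ≠ none → ∃ z', Nonempty (A z' z)) ∧
  (¬ ∃ (k : ℕ) (v : Fin (k+2) → V),
      (∀ s : Fin (k+1), Nonempty (A (v s.castSucc) (v s.succ))) ∧
      v 0 = v (Fin.last (k+1)) ∧ ∃ s, τ (v s) = none) ∧
  (∀ x y, Nonempty (A x y) → τ y = none → τ x = none)

/-- The quiver with vertices `u_i = (i, false)` and `v_i = (i, true)` for
`i ≥ 0`, and single arrows `u_i → v_i` and `v_i → u_{i+1}`. -/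
def exA : (ℕ × Bool) → (ℕ × Bool) → Type :=
  fun p q => PLift ((p.2 = false ∧ q = (p.1, true)) ∨
    (p.2 = true ∧ q = (p.1 + 1, false)))

/-- The translation `τ (u_{i+1}) = u_i`, `τ (v_{i+1}) = v_i`, with `u_0` and
`v_0` projective. -/
def exTau : ℕ × Bool → Option (ℕ × Bool) :=
  fun p => match p.1 with
    | 0 => none
    | Nat.succ k => some (k, p.2)

/-!
Every arrow of `Γ` strictly raises the weight `2 i + [vertex is v_i]`, so `Γ` has no oriented
cycles, and the remaining hereditary and mesh conditions are checked vertex by vertex. A path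
of length two in `Γ` is `u_i → v_i → u_{i+1}` or `v_i → u_{i+1} → v_{i+1}`, and in both cases
`τ` maps its end to its start, so it is not sectional. Hence `Γ²` has no arrows, while `u_2` is
not projective for `τ²`.
-/

section General

variable {V : Type*} {A : V → V → Type*} {τ : V → Option V}

theorem IsHereditary.not_of_isEmpty_of_ne_none {z : V} (hz : τ z ≠ none)
    (hA : ∀ z', IsEmpty (A z' z)) : ¬ IsHereditary A τ :=
  fun h ↦ by
    obtain ⟨z', ⟨a⟩⟩ := h.1 z hz
    exact (hA z').false a

theorem not_exists_cycle_of_strictMono {α : Type*} [Preorder α] (w : V → α)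
    (hw : ∀ x y, Nonempty (A x y) → w x < w y) :
    ¬ ∃ (k : ℕ) (v : Fin (k+2) → V),
      (∀ s : Fin (k+1), Nonempty (A (v s.castSucc) (v s.succ))) ∧
      v 0 = v (Fin.last (k+1)) ∧ ∃ s, τ (v s) = none := by
  rintro ⟨k, v, harr, hcyc, -⟩
  have hmono : StrictMono (w ∘ v) :=
    Fin.strictMono_iff_lt_succ.2 fun i ↦ hw _ _ (harr i)
  have hlt := hmono (Fin.last_pos : (0 : Fin (k + 2)) < Fin.last (k + 1))
  simp only [Function.comp_apply, hcyc] at hlt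
  exact lt_irrefl _ hlt

end General

theorem exA_nonempty_iff {x y : ℕ × Bool} : Nonempty (exA x y) ↔
    (x.2 = false ∧ y = (x.1, true)) ∨ (x.2 = true ∧ y = (x.1 + 1, false)) :=
  ⟨fun ⟨⟨h⟩⟩ ↦ h, fun h ↦ ⟨⟨h⟩⟩⟩

instance (x y : ℕ × Bool) : Subsingleton (exA x y) :=
  ⟨fun ⟨_⟩ ⟨_⟩ ↦ rfl⟩

theorem exTau_eq_none_iff {p : ℕ × Bool} : exTau p = none ↔ p.1 = 0 := by
  rcases p with ⟨_ | k, b⟩ <;> simp [exTau]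

theorem eq_of_exTau_eq_some {x z : ℕ × Bool} (h : exTau x = some z) :
    x = (z.1 + 1, z.2) := by
  rcases x with ⟨_ | k, b⟩
  · simp [exTau] at h
  · obtain rfl : (k, b) = z := Option.some_injective _ h
    rfl

theorem nat_card_exA_eq_of_exTau_eq_some {x y z : ℕ × Bool} (h : exTau y = some z) :
    Nat.card (exA x y) = Nat.card (exA z x) := by
  obtain rfl := eq_of_exTau_eq_some h
  unfold exA
  congr 2
  rcases x with ⟨i, c⟩
  rcases z with ⟨j, b⟩
  cases b <;> cases c <;> simp [Prod.ext_iff] <;> omega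

theorem tauInjective_exTau : TauInjective exTau := fun _ _ _ hx hy ↦
  (eq_of_exTau_eq_some hx).trans (eq_of_exTau_eq_some hy).symm

theorem quiverLocFin_exA : QuiverLocFin exA := by
  refine ⟨fun _ _ ↦ Finite.of_subsingleton, fun x ↦ ?_, fun y ↦ ?_⟩ <;>
    refine Set.Subsingleton.finite fun p hp q hq ↦ ?_ <;>
    rcases exA_nonempty_iff.1 hp with ⟨hp₁, hp₂⟩ | ⟨hp₁, hp₂⟩ <;>
    rcases exA_nonempty_iff.1 hq with ⟨hq₁, hq₂⟩ | ⟨hq₁, hq₂⟩ <;>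
    simp_all [Prod.ext_iff]

theorem isTranslationQuiver_ex : IsTranslationQuiver exA exTau :=
  ⟨quiverLocFin_exA, tauInjective_exTau, fun _ _ _ ↦ nat_card_exA_eq_of_exTau_eq_some⟩

def exWeight (p : ℕ × Bool) : ℕ := 2 * p.1 + p.2.toNat

theorem exWeight_lt_of_nonempty {x y : ℕ × Bool} (h : Nonempty (exA x y)) :
    exWeight x < exWeight y := by
  rcases exA_nonempty_iff.1 h with ⟨hx, rfl⟩ | ⟨hx, rfl⟩ <;>
    simp only [exWeight, hx, Bool.toNat_true, Bool.toNat_false] <;> omega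

theorem isHereditary_ex : IsHereditary exA exTau := by
  refine ⟨?_, not_exists_cycle_of_strictMono exWeight fun _ _ ↦ exWeight_lt_of_nonempty, ?_⟩
  · rintro ⟨_ | k, _ | _⟩ hz
    · exact absurd rfl hz
    · exact absurd rfl hz
    · exact ⟨(k, true), ⟨⟨Or.inr ⟨rfl, rfl⟩⟩⟩⟩
    · exact ⟨(k + 1, false), ⟨⟨Or.inl ⟨rfl, rfl⟩⟩⟩⟩
  · intro x y hxy hy
    rw [exTau_eq_none_iff] at hy ⊢
    rcases exA_nonempty_iff.1 hxy with ⟨-, rfl⟩ | ⟨-, rfl⟩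
    · exact hy
    · simp at hy

theorem exTau_eq_some_of_nonempty_of_nonempty {x y z : ℕ × Bool}
    (hxy : Nonempty (exA x y)) (hyz : Nonempty (exA y z)) : exTau z = some x := by
  rcases x with ⟨i, _ | _⟩ <;>
    rcases exA_nonempty_iff.1 hxy with ⟨hx, rfl⟩ | ⟨hx, rfl⟩ <;>
    rcases exA_nonempty_iff.1 hyz with ⟨hy, rfl⟩ | ⟨hy, rfl⟩ <;>
    simp_all [exTau]

theorem isEmpty_sectPath_two (x y : ℕ × Bool) : IsEmpty (SectPath exA exTau 2 x y) :=
  ⟨fun ⟨⟨_, _, _, hsect⟩, arr⟩ ↦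
    hsect 1 le_rfl le_rfl (exTau_eq_some_of_nonempty_of_nonempty ⟨arr 0⟩ ⟨arr 1⟩)⟩

/-- There is a hereditary translation quiver whose square is not hereditary:
for the example `(exA, exTau)` above, `(exA, exTau)` is a hereditary
translation quiver, its square `Γ²` has no arrows at all (no path of length
`2` is sectional), yet `Γ²` has non-projective vertices; hence `Γ²` has a
non-projective vertex with no incoming arrow and is not hereditary. -/
theorem stmt15 :
    IsTranslationQuiver exA exTau ∧
    IsHereditary exA exTau ∧
    (∀ x y : ℕ × Bool, IsEmpty (SectPath exA exTau 2 x y)) ∧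
    (∃ z w : ℕ × Bool, iterTau exTau 2 z = some w) ∧
    (∃ z : ℕ × Bool, iterTau exTau 2 z ≠ none ∧
      ∀ z', IsEmpty (SectPath exA exTau 2 z' z)) ∧
    ¬ IsHereditary (fun x y => SectPath exA exTau 2 x y) (iterTau exTau 2) := by
  have hu₂ : iterTau exTau 2 (2, false) = some (0, false) := rfl
  have hu₂_ne : iterTau exTau 2 (2, false) ≠ none := by simp [hu₂]
  exact ⟨isTranslationQuiver_ex, isHereditary_ex, isEmpty_sectPath_two, ⟨_, _, hu₂⟩,
    ⟨_, hu₂_ne, fun z' ↦ isEmpty_sectPath_two z' _⟩,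
    IsHereditary.not_of_isEmpty_of_ne_none hu₂_ne fun z' ↦ isEmpty_sectPath_two z' _⟩
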